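/- For every real t with 0 < |t| < π and every real x with -1 < x < 1, the series ∑_{n=1}^∞ (-1)^n · 2·(t·cos(nπx) − nπ·sin(nπx)) / (t² + n²π²) converges and its sum equals e^{t x}/sinh(t) − 1/t. -/

import Mathlib

open Real MeasureTheory Filter

lemma hasDerivAt_aux (t a x y : ℝ) (ha : t^2 + a^2 ≠ 0) :
    HasDerivAt (fun y => Real.exp (t*y) * (t * Real.cos (a*(x-y)) - a * Real.sin (a*(x-y))) / (t^2+a^2))
      (Real.exp (t*y) * Real.cos (a*(x-y))) y := by
  have h1 : HasDerivAt (fun y : ℝ => t*y) t y := by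
    simpa using (hasDerivAt_id y).const_mul t
  have h2 : HasDerivAt (fun y : ℝ => a*(x-y)) (-a) y := by
    simpa using (((hasDerivAt_id y).const_sub x).const_mul a)
  have hE := h1.exp
  have hC := h2.cos
  have hS := h2.sin
  have h3 := ((hE.mul (((hC.const_mul t)).sub (hS.const_mul a)))).div_const (t^2+a^2)
  refine h3.congr_deriv ?_
  rw [div_eq_iff ha, Pi.sub_apply]; ring

lemma expcos_integral (t a x : ℝ) (ha : t^2 + a^2 ≠ 0) :
    ∫ y in (-1:ℝ)..1, Real.exp (t*y) * Real.cos (a*(x - y)) =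
      (Real.exp t * (t * Real.cos (a*(x-1)) - a * Real.sin (a*(x-1)))
       - Real.exp (-t) * (t * Real.cos (a*(x+1)) - a * Real.sin (a*(x+1)))) / (t^2+a^2) := by
  rw [intervalIntegral.integral_eq_sub_of_hasDerivAt
    (a := (-1:ℝ)) (b := (1:ℝ))
    (f := fun y => Real.exp (t*y) * (t * Real.cos (a*(x-y)) - a * Real.sin (a*(x-y))) / (t^2+a^2))
    (fun y _ => hasDerivAt_aux t a x y ha)
    (Continuous.intervalIntegrable (by continuity) _ _)]
  rw [mul_one, show t * (-1) = -t by ring, show x - -1 = x + 1 by ring]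
  ring

lemma dirichlet_kernel (N : ℕ) (θ : ℝ) :
    (1 + 2 * ∑ n ∈ Finset.range N, Real.cos ((n+1) * θ)) * Real.sin (θ/2)
      = Real.sin ((N + 1/2) * θ) := by
  induction N with
  | zero => norm_num; ring_nf
  | succ N ih =>
    have key : Real.sin (((N:ℝ) + 1 + 1/2) * θ)
        = Real.sin (((N:ℝ)+1/2)*θ) + 2 * Real.cos (((N:ℝ)+1)*θ) * Real.sin (θ/2) := by
      have e1 : ((N:ℝ)+1+1/2)*θ = ((N:ℝ)+1)*θ + θ/2 := by ring
      have e2 : ((N:ℝ)+1/2)*θ = ((N:ℝ)+1)*θ - θ/2 := by ring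
      rw [e1, e2, Real.sin_add, Real.sin_sub]; ring
    rw [Finset.sum_range_succ]
    push_cast
    push_cast at key ih
    rw [key, ← ih]; ring

lemma integral_exp_t (t : ℝ) (ht : t ≠ 0) :
    ∫ y in (-1:ℝ)..1, Real.exp (t*y) = 2 * Real.sinh t / t := by
  rw [intervalIntegral.integral_eq_sub_of_hasDerivAt
    (a := (-1:ℝ)) (b := (1:ℝ)) (f := fun y => Real.exp (t*y) / t)
    (fun y _ => by
      have h1 : HasDerivAt (fun y : ℝ => t*y) t y := by
        simpa using (hasDerivAt_id y).const_mul t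
      have := h1.exp.div_const t
      refine this.congr_deriv ?_
      rw [mul_div_assoc, div_self ht, mul_one])
    (Continuous.intervalIntegrable (by continuity) _ _)]
  rw [Real.sinh_eq]
  field_simp

lemma integral_cos_zero (x : ℝ) (m : ℕ) (hm : 0 < m) :
    ∫ y in (-1:ℝ)..1, Real.cos (((m:ℝ)*Real.pi)*(x - y)) = 0 := by
  have hmπ : (m:ℝ)*Real.pi ≠ 0 := by positivity
  rw [intervalIntegral.integral_eq_sub_of_hasDerivAt
    (a := (-1:ℝ)) (b := (1:ℝ))
    (f := fun y => -Real.sin (((m:ℝ)*Real.pi)*(x - y)) / ((m:ℝ)*Real.pi))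
    (fun y _ => by
      have h2 : HasDerivAt (fun y : ℝ => ((m:ℝ)*Real.pi)*(x-y)) (-((m:ℝ)*Real.pi)) y := by
        simpa using (((hasDerivAt_id y).const_sub x).const_mul ((m:ℝ)*Real.pi))
      have := (h2.sin.neg).div_const ((m:ℝ)*Real.pi)
      refine this.congr_deriv ?_
      rw [div_eq_iff hmπ]; ring)
    (Continuous.intervalIntegrable (by continuity) _ _)]
  have e1 : ((m:ℝ)*Real.pi)*(x - 1) = -((m:ℝ)*Real.pi - (m:ℝ)*Real.pi*x) := by ring
  have e2 : ((m:ℝ)*Real.pi)*(x - -1) = (m:ℝ)*Real.pi - (-((m:ℝ)*Real.pi*x)) := by ring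
  rw [e1, e2, Real.sin_neg, Real.sin_nat_mul_pi_sub, Real.sin_nat_mul_pi_sub, Real.sin_neg]
  ring

lemma rl_aux (g : ℝ → ℝ) :
    Tendsto (fun W : ℝ => ∫ v : ℝ, Complex.exp ((-(2*Real.pi*(v*W))) * Complex.I) * (g v : ℂ))
      (cocompact ℝ) (nhds 0) := by
  have h := Real.tendsto_integral_exp_smul_cocompact (fun v : ℝ => (g v : ℂ))
  refine h.congr (fun W => ?_)
  refine congrArg _ (funext fun v => ?_)
  rw [Circle.smul_def, Real.fourierChar_apply, smul_eq_mul]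
  push_cast
  ring_nf

lemma rl_sin (g : ℝ → ℝ) (hg : Integrable g) (x : ℝ) (w : ℕ → ℝ)
    (hw : Tendsto w atTop atTop) :
    Tendsto (fun N : ℕ => ∫ y : ℝ, g y * Real.sin ((2*Real.pi*(w N)) * (x - y)))
      atTop (nhds 0) := by
  have h0 : Tendsto (fun N : ℕ =>
      ∫ v : ℝ, Complex.exp ((-(2*Real.pi*(v*(w N)))) * Complex.I) * (g v : ℂ))
      atTop (nhds 0) :=
    (rl_aux g).comp (hw.mono_right (by rw [cocompact_eq_atBot_atTop]; exact le_sup_right))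
  refine squeeze_zero_norm (fun N => ?_) (by simpa only [norm_zero] using h0.norm)
  set W := w N with hWdef
  have hint : Integrable (fun v : ℝ =>
      Complex.exp ((-(2*Real.pi*(v*W))) * Complex.I) * (g v : ℂ)) := by
    refine (hg.ofReal).bdd_mul (c := 1) ?_ (ae_of_all _ fun v => by
      rw [Complex.norm_exp]
      simp [Complex.mul_I_re])
    exact (Complex.continuous_exp.comp (by continuity)).aestronglyMeasurable
  have key : ∫ y : ℝ, g y * Real.sin ((2*Real.pi*W) * (x - y))
      = Complex.im (Complex.exp ((2*Real.pi*W*x : ℝ) * Complex.I) *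
          ∫ v : ℝ, Complex.exp ((-(2*Real.pi*(v*W))) * Complex.I) * (g v : ℂ)) := by
    have h2 := Complex.imCLM.integral_comp_comm
      (hint.const_mul (Complex.exp ((2*Real.pi*W*x : ℝ) * Complex.I)))
    calc ∫ y : ℝ, g y * Real.sin ((2*Real.pi*W) * (x - y))
        = ∫ y : ℝ, Complex.imCLM (Complex.exp ((2*Real.pi*W*x : ℝ) * Complex.I) *
            (Complex.exp ((-(2*Real.pi*(y*W))) * Complex.I) * (g y : ℂ))) := by
          refine congrArg _ (funext fun y => ?_)
          simp only [Complex.imCLM_apply]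
          rw [← mul_assoc, ← Complex.exp_add]
          have e : ((2*Real.pi*W*x : ℝ) : ℂ) * Complex.I + (-(2*Real.pi*((y:ℝ)*W))) * Complex.I
              = ((2*Real.pi*W*(x-y) : ℝ) : ℂ) * Complex.I := by push_cast; ring
          rw [e]
          simp only [Complex.mul_im, Complex.ofReal_re, Complex.ofReal_im, mul_zero, zero_add,
            add_zero]
          rw [Complex.exp_ofReal_mul_I_im]
          ring
      _ = Complex.imCLM (∫ y : ℝ, Complex.exp ((2*Real.pi*W*x : ℝ) * Complex.I) *
            (Complex.exp ((-(2*Real.pi*(y*W))) * Complex.I) * (g y : ℂ))) := h2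
      _ = _ := by rw [integral_const_mul]; rfl
  rw [key]
  refine le_trans (Complex.abs_im_le_norm _) ?_
  rw [norm_mul]
  have : ‖Complex.exp ((2*Real.pi*W*x : ℝ) * Complex.I)‖ = 1 := by
    rw [Complex.norm_exp]; simp [Complex.mul_I_re]
  rw [this, one_mul]

lemma sin_lower (M u : ℝ) (hM0 : 0 < M) (hM2 : M < 2) (hu0 : 0 ≤ u) (huM : u ≤ M) :
    Real.sin (Real.pi * M / 2) / M * u ≤ Real.sin (Real.pi * u / 2) := by
  have hmem1 : Real.pi * M / 2 ∈ Set.Icc (0:ℝ) Real.pi := by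
    constructor <;> nlinarith [Real.pi_pos]
  have hmem2 : (0:ℝ) ∈ Set.Icc (0:ℝ) Real.pi := by
    constructor <;> nlinarith [Real.pi_pos]
  have ha : 0 ≤ u / M := by positivity
  have hb : 0 ≤ 1 - u / M := by
    have : u / M ≤ 1 := (div_le_one hM0).2 huM
    linarith
  have hab : u / M + (1 - u / M) = 1 := by ring
  have := strictConcaveOn_sin_Icc.concaveOn.2 hmem1 hmem2 ha hb hab
  simp only [smul_eq_mul, Real.sin_zero, mul_zero, add_zero] at this
  have e : u / M * (Real.pi * M / 2) = Real.pi * u / 2 := by field_simp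
  rw [e] at this
  calc Real.sin (Real.pi * M / 2) / M * u = u / M * Real.sin (Real.pi * M / 2) := by ring
    _ ≤ _ := this

lemma exp_diff_le (a b : ℝ) :
    Real.exp b - Real.exp a ≤ (b - a) * Real.exp b := by
  have h1 : a - b + 1 ≤ Real.exp (a - b) := Real.add_one_le_exp _
  have h2 : Real.exp (a - b) * Real.exp b = Real.exp a := by
    rw [← Real.exp_add]; ring_nf
  nlinarith [Real.exp_pos b]

lemma exp_abs_diff (a b : ℝ) : |Real.exp a - Real.exp b| ≤ |a - b| * Real.exp (max a b) := by
  rcases le_total a b with h | h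
  · rw [abs_of_nonpos (by simp [Real.exp_le_exp, h]), abs_of_nonpos (by linarith), max_eq_right h]
    have := exp_diff_le a b
    linarith
  · rw [abs_of_nonneg (by simp [Real.exp_le_exp, h]), abs_of_nonneg (by linarith), max_eq_left h]
    have := exp_diff_le b a
    linarith

lemma g_bound (t x y M : ℝ) (hx : |x| < 1) (hy : |y| ≤ 1) (hM : M = 1 + |x|) :
    |(Real.exp (t*y) - Real.exp (t*x)) / Real.sin (Real.pi * (x - y) / 2)|
      ≤ |t| * Real.exp |t| * M / Real.sin (Real.pi * M / 2) := by
  have hM0 : 0 < M := by rw [hM]; positivity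
  have hM2 : M < 2 := by rw [hM]; linarith
  have hsinM : 0 < Real.sin (Real.pi * M / 2) := by
    apply Real.sin_pos_of_pos_of_lt_pi
    · positivity
    · nlinarith [Real.pi_pos]
  by_cases hxy : y = x
  · subst hxy
    simp only [sub_self, zero_div, abs_zero]
    positivity
  · have hu0 : 0 < |x - y| := by
      rw [abs_pos]; intro h; apply hxy; linarith [sub_eq_zero.mp h]
    have huM : |x - y| ≤ M := by
      calc |x - y| ≤ |x| + |y| := abs_sub _ _
        _ ≤ M := by rw [hM]; linarith
    have habs : |Real.sin (Real.pi * (x-y) / 2)| = Real.sin (Real.pi * |x-y| / 2) := by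
      rcases abs_cases (x - y) with ⟨h1, h2⟩ | ⟨h1, h2⟩
      · rw [h1]
        exact abs_of_nonneg (Real.sin_nonneg_of_nonneg_of_le_pi (by positivity)
          (by nlinarith [Real.pi_pos]))
      · rw [h1]
        have e : Real.pi * -(x - y) / 2 = -(Real.pi * (x - y) / 2) := by ring
        rw [e, Real.sin_neg]
        refine abs_of_nonpos ?_
        have hle : -(x - y) ≤ M := h1 ▸ huM
        have : Real.sin (-(Real.pi * (x - y) / 2)) ≥ 0 := by
          apply Real.sin_nonneg_of_nonneg_of_le_pi
          · nlinarith [Real.pi_pos, mul_pos Real.pi_pos (neg_pos.mpr h2)]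
          · nlinarith [Real.pi_pos, mul_le_mul_of_nonneg_left hle Real.pi_pos.le]
        rw [Real.sin_neg] at this; linarith
    have hden : Real.sin (Real.pi * M / 2) / M * |x - y| ≤ |Real.sin (Real.pi * (x-y) / 2)| := by
      rw [habs]
      exact sin_lower M _ hM0 hM2 (abs_nonneg _) huM
    have hnum : |Real.exp (t*y) - Real.exp (t*x)| ≤ (|t| * Real.exp |t|) * |x - y| := by
      calc |Real.exp (t*y) - Real.exp (t*x)| ≤ |t*y - t*x| * Real.exp (max (t*y) (t*x)) :=
            exp_abs_diff _ _
        _ ≤ (|t| * |x - y|) * Real.exp |t| := by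
            apply mul_le_mul
            · rw [show t*y - t*x = -(t*(x-y)) by ring, abs_neg, abs_mul]
            · rw [Real.exp_le_exp]
              have hty : t*y ≤ |t| := by
                calc t*y ≤ |t*y| := le_abs_self _
                  _ = |t| * |y| := abs_mul _ _
                  _ ≤ |t| * 1 := mul_le_mul_of_nonneg_left hy (abs_nonneg t)
                  _ = |t| := mul_one _
              have htx : t*x ≤ |t| := by
                calc t*x ≤ |t*x| := le_abs_self _
                  _ = |t| * |x| := abs_mul _ _
                  _ ≤ |t| * 1 := mul_le_mul_of_nonneg_left hx.le (abs_nonneg t)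
                  _ = |t| := mul_one _
              exact max_le hty htx
            · positivity
            · positivity
        _ = (|t| * Real.exp |t|) * |x - y| := by ring
    rw [abs_div]
    calc |Real.exp (t*y) - Real.exp (t*x)| / |Real.sin (Real.pi * (x-y) / 2)|
        ≤ ((|t| * Real.exp |t|) * |x - y|) / (Real.sin (Real.pi * M / 2) / M * |x - y|) := by
          apply div_le_div₀ (by positivity) hnum (by positivity) hden
      _ = (|t| * Real.exp |t|) / (Real.sin (Real.pi * M / 2) / M) := by
          rw [mul_div_mul_right _ _ (ne_of_gt hu0)]
      _ = |t| * Real.exp |t| * M / Real.sin (Real.pi * M / 2) := by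
          rw [div_div_eq_mul_div]

lemma term_eq (t x : ℝ) (ht : t ≠ 0) (n : ℕ) :
    (∫ y in (-1:ℝ)..1, Real.exp (t*y) * Real.cos (((n:ℝ)+1) * (Real.pi * (x - y))))
      = Real.sinh t * ((-1:ℝ)^(n+1) *
        (2*(t*Real.cos (((n:ℝ)+1)*Real.pi*x) - ((n:ℝ)+1)*Real.pi*Real.sin (((n:ℝ)+1)*Real.pi*x))
          / (t^2+((n:ℝ)+1)^2*Real.pi^2))) := by
  have ha : t^2 + (((n:ℝ)+1)*Real.pi)^2 ≠ 0 := by positivity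
  have h0 : (∫ y in (-1:ℝ)..1, Real.exp (t*y) * Real.cos (((n:ℝ)+1) * (Real.pi * (x - y))))
      = ∫ y in (-1:ℝ)..1, Real.exp (t*y) * Real.cos ((((n:ℝ)+1)*Real.pi) * (x - y)) := by
    refine intervalIntegral.integral_congr (fun y _ => ?_)
    rw [mul_assoc]
  rw [h0, expcos_integral t (((n:ℝ)+1)*Real.pi) x ha]
  have e1 : (((n:ℝ)+1)*Real.pi)*(x - 1) = -(((n+1:ℕ):ℝ)*Real.pi - ((n:ℝ)+1)*Real.pi*x) := by
    push_cast; ring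
  have e2 : (((n:ℝ)+1)*Real.pi)*(x + 1) = ((n+1:ℕ):ℝ)*Real.pi - (-(((n:ℝ)+1)*Real.pi*x)) := by
    push_cast; ring
  rw [e1, e2, Real.cos_neg, Real.sin_neg, Real.cos_nat_mul_pi_sub, Real.sin_nat_mul_pi_sub,
    Real.cos_nat_mul_pi_sub, Real.sin_nat_mul_pi_sub, Real.cos_neg, Real.sin_neg, Real.sinh_eq]
  push_cast
  field_simp

lemma integral_cos_zero' (x : ℝ) (n : ℕ) :
    ∫ y in (-1:ℝ)..1, Real.cos (((n:ℝ)+1) * (Real.pi * (x - y))) = 0 := by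
  have h := integral_cos_zero x (n+1) (Nat.succ_pos n)
  rw [← h]
  refine intervalIntegral.integral_congr (fun y _ => ?_)
  push_cast
  rw [mul_assoc]


set_option maxHeartbeats 1000000 in
/-- For every real `t` with `0 < |t| < π` and every real `x ∈ (-1,1)`,
the series `∑_{n=1}^∞ (-1)^n · 2(t cos(nπx) − nπ sin(nπx)) / (t² + n²π²)` converges and its
sum equals `exp (t x) / sinh t − 1 / t` (real form of the residue expansion of the
generating function). -/
theorem stmt5 (t x : ℝ) (ht0 : 0 < |t|) (htpi : |t| < Real.pi)
    (hx1 : -1 < x) (hx2 : x < 1) :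
    Filter.Tendsto
      (fun N : ℕ => ∑ n ∈ Finset.range N,
        (-1 : ℝ) ^ (n + 1) *
          (2 * (t * Real.cos ((n + 1) * Real.pi * x)
              - (n + 1) * Real.pi * Real.sin ((n + 1) * Real.pi * x))
            / (t ^ 2 + (n + 1) ^ 2 * Real.pi ^ 2)))
      Filter.atTop
      (nhds (Real.exp (t * x) / Real.sinh t - 1 / t)) := by
  have ht : t ≠ 0 := by
    intro h; rw [h, abs_zero] at ht0; exact lt_irrefl 0 ht0
  have hsinh : Real.sinh t ≠ 0 := fun h => ht (Real.sinh_eq_zero.mp h)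
  have hx : |x| < 1 := abs_lt.mpr ⟨hx1, hx2⟩
  set g : ℝ → ℝ := fun y =>
    (Real.exp (t*y) - Real.exp (t*x)) / Real.sin (Real.pi * (x - y) / 2) with hg
  set E : ℕ → ℝ := fun N =>
    ∫ y in (-1:ℝ)..1, (Real.exp (t*y) - Real.exp (t*x)) *
      (1 + 2 * ∑ n ∈ Finset.range N, Real.cos (((n:ℝ)+1) * (Real.pi * (x - y)))) with hE
  have hExp : Continuous (fun y : ℝ => Real.exp (t*y)) :=
    Real.continuous_exp.comp (continuous_const.mul continuous_id)
  have hcos : ∀ i : ℕ, Continuous fun y : ℝ => Real.cos (((i:ℝ)+1) * (Real.pi * (x - y))) :=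
    fun i => Real.continuous_cos.comp (continuous_const.mul
      (continuous_const.mul (continuous_const.sub continuous_id)))
  have hDcont : ∀ N : ℕ, Continuous (fun y : ℝ =>
      1 + 2 * ∑ n ∈ Finset.range N, Real.cos (((n:ℝ)+1) * (Real.pi * (x - y)))) :=
    fun N => continuous_const.add (continuous_const.mul
      (continuous_finset_sum _ (fun i _ => hcos i)))
  -- Step A : partial sums in terms of E N
  have stepA : ∀ N : ℕ, (∑ n ∈ Finset.range N,
      (-1 : ℝ) ^ (n + 1) *
        (2 * (t * Real.cos ((n + 1) * Real.pi * x)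
            - (n + 1) * Real.pi * Real.sin ((n + 1) * Real.pi * x))
          / (t ^ 2 + (n + 1) ^ 2 * Real.pi ^ 2)))
      = (E N / 2 + Real.exp (t*x) - Real.sinh t / t) / Real.sinh t := by
    intro N
    set S := ∫ y in (-1:ℝ)..1, Real.exp (t*y) *
        ∑ n ∈ Finset.range N, Real.cos (((n:ℝ)+1) * (Real.pi * (x - y))) with hS
    have h1 : (∑ n ∈ Finset.range N,
        (-1 : ℝ) ^ (n + 1) *
          (2 * (t * Real.cos ((n + 1) * Real.pi * x)
              - (n + 1) * Real.pi * Real.sin ((n + 1) * Real.pi * x))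
            / (t ^ 2 + (n + 1) ^ 2 * Real.pi ^ 2)))
        = S / Real.sinh t := by
      have hterm : ∀ n ∈ Finset.range N,
          (-1 : ℝ) ^ (n + 1) *
            (2 * (t * Real.cos ((n + 1) * Real.pi * x)
                - (n + 1) * Real.pi * Real.sin ((n + 1) * Real.pi * x))
              / (t ^ 2 + (n + 1) ^ 2 * Real.pi ^ 2))
          = (∫ y in (-1:ℝ)..1, Real.exp (t*y) * Real.cos (((n:ℝ)+1) * (Real.pi * (x - y))))
              / Real.sinh t := by
        intro n _
        rw [term_eq t x ht n]
        field_simp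
      have e0 : S = ∑ n ∈ Finset.range N,
          ∫ y in (-1:ℝ)..1, Real.exp (t*y) * Real.cos (((n:ℝ)+1) * (Real.pi * (x - y))) := by
        rw [hS, intervalIntegral.integral_congr
          (g := fun y => ∑ n ∈ Finset.range N,
            Real.exp (t*y) * Real.cos (((n:ℝ)+1) * (Real.pi * (x - y))))
          (fun y _ => by rw [Finset.mul_sum])]
        exact intervalIntegral.integral_finset_sum (fun i _ =>
          Continuous.intervalIntegrable (hExp.mul (hcos i)) _ _)
      rw [Finset.sum_congr rfl hterm, ← Finset.sum_div, ← e0]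
    have h3 : (∫ y in (-1:ℝ)..1,
        (1 + 2 * ∑ n ∈ Finset.range N, Real.cos (((n:ℝ)+1) * (Real.pi * (x - y))))) = 2 := by
      have hc1 : IntervalIntegrable (fun _ : ℝ => (1:ℝ)) volume (-1) 1 :=
        intervalIntegrable_const
      have hc2 : IntervalIntegrable (fun y : ℝ =>
          2 * ∑ n ∈ Finset.range N, Real.cos (((n:ℝ)+1) * (Real.pi * (x - y)))) volume (-1) 1 :=
        Continuous.intervalIntegrable (continuous_const.mul
          (continuous_finset_sum _ (fun i _ => hcos i))) _ _
      rw [intervalIntegral.integral_add hc1 hc2,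
        intervalIntegral.integral_const_mul,
        intervalIntegral.integral_finset_sum (fun i (_ : i ∈ Finset.range N) =>
          Continuous.intervalIntegrable
            (hcos i) (-1) 1)]
      simp only [integral_cos_zero' x, Finset.sum_const_zero, mul_zero, add_zero]
      norm_num
    have h4 : (∫ y in (-1:ℝ)..1, Real.exp (t*y) *
        (1 + 2 * ∑ n ∈ Finset.range N, Real.cos (((n:ℝ)+1) * (Real.pi * (x - y)))))
        = 2 * Real.sinh t / t + 2 * S := by
      have e1 : (∫ y in (-1:ℝ)..1, Real.exp (t*y) *
          (1 + 2 * ∑ n ∈ Finset.range N, Real.cos (((n:ℝ)+1) * (Real.pi * (x - y)))))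
          = (∫ y in (-1:ℝ)..1, (Real.exp (t*y) + 2 * (Real.exp (t*y) *
              ∑ n ∈ Finset.range N, Real.cos (((n:ℝ)+1) * (Real.pi * (x - y)))))) :=
        intervalIntegral.integral_congr (fun y _ => by ring)
      have hc3 : IntervalIntegrable (fun y : ℝ => Real.exp (t*y)) volume (-1) 1 :=
        Continuous.intervalIntegrable hExp _ _
      have hc4 : IntervalIntegrable (fun y : ℝ => 2 * (Real.exp (t*y) *
          ∑ n ∈ Finset.range N, Real.cos (((n:ℝ)+1) * (Real.pi * (x - y))))) volume (-1) 1 :=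
        Continuous.intervalIntegrable (continuous_const.mul (hExp.mul
          (continuous_finset_sum _ (fun i _ => hcos i)))) _ _
      rw [e1, intervalIntegral.integral_add hc3 hc4,
        intervalIntegral.integral_const_mul, integral_exp_t t ht, ← hS]
    have h2 : E N = (2 * Real.sinh t / t + 2 * S) - 2 * Real.exp (t*x) := by
      have e2 : E N = ∫ y in (-1:ℝ)..1, (Real.exp (t*y) *
          (1 + 2 * ∑ n ∈ Finset.range N, Real.cos (((n:ℝ)+1) * (Real.pi * (x - y))))
          - Real.exp (t*x) *
          (1 + 2 * ∑ n ∈ Finset.range N, Real.cos (((n:ℝ)+1) * (Real.pi * (x - y))))) := by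
        rw [hE]
        exact intervalIntegral.integral_congr (fun y _ => by ring)
      rw [e2, intervalIntegral.integral_sub
        (Continuous.intervalIntegrable (u := fun y => Real.exp (t*y) * (1 + 2 * ∑ n ∈ Finset.range N, Real.cos (((n:ℝ)+1) * (Real.pi * (x - y))))) (hExp.mul (hDcont N)) _ _)
        (Continuous.intervalIntegrable (u := fun y => Real.exp (t*x) * (1 + 2 * ∑ n ∈ Finset.range N, Real.cos (((n:ℝ)+1) * (Real.pi * (x - y))))) (continuous_const.mul (hDcont N)) _ _),
        intervalIntegral.integral_const_mul, h3, h4]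
      ring
    rw [h1]
    congr 1
    linarith [h2, mul_div_assoc 2 (Real.sinh t) t]
  -- Step B : E N = oscillatory integral of g
  have stepB : ∀ N : ℕ, E N = ∫ y in (-1:ℝ)..1,
      g y * Real.sin ((2*Real.pi*(((N:ℝ)+1/2)/2)) * (x - y)) := by
    intro N
    refine intervalIntegral.integral_congr (fun y hy => ?_)
    rw [Set.uIcc_of_le (by norm_num : (-1:ℝ) ≤ 1)] at hy
    have harg : (2*Real.pi*(((N:ℝ)+1/2)/2)) * (x - y) = ((N:ℝ)+1/2) * (Real.pi * (x-y)) := by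
      ring
    rw [harg]
    by_cases hxy : y = x
    · subst hxy
      simp [hg]
    · have hs : Real.sin (Real.pi * (x - y) / 2) ≠ 0 := by
        intro h
        rcases Real.sin_eq_zero_iff.mp h with ⟨k, hk⟩
        have h1 : x - y = 2 * k := by
          have hpi := Real.pi_ne_zero
          field_simp at hk
          nlinarith [hk, Real.pi_pos]
        have h2 : |x - y| < 2 := by
          calc |x - y| ≤ |x| + |y| := abs_sub _ _
            _ < 2 := by
              have : |y| ≤ 1 := abs_le.mpr ⟨hy.1, hy.2⟩
              linarith
        have h3 : |(k:ℝ)| < 1 := by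
          rw [h1, abs_mul, abs_two] at h2
          linarith [abs_nonneg (k:ℝ)]
        have h4 : k = 0 := by
          have h5 : |k| < 1 := by exact_mod_cast h3
          exact Int.abs_lt_one_iff.mp h5
        apply hxy
        rw [h4] at h1
        push_cast at h1
        linarith
      have hker := dirichlet_kernel N (Real.pi * (x - y))
      simp only [hg]
      rw [← hker, div_mul_eq_mul_div, eq_div_iff hs]
      ring
  -- Step C : E N → 0 (Riemann-Lebesgue)
  have stepC : Tendsto E atTop (nhds 0) := by
    have hgmeas : Measurable g :=
      ((hExp.sub continuous_const).measurable).div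
        ((Real.continuous_sin.comp ((continuous_const.mul
          (continuous_const.sub continuous_id)).div_const 2)).measurable)
    have hgIO : IntegrableOn g (Set.Ioc (-1:ℝ) 1) := by
      apply Measure.integrableOn_of_bounded
      · exact (measure_Ioc_lt_top).ne
      · exact hgmeas.aestronglyMeasurable
      · refine (ae_restrict_iff' measurableSet_Ioc).2 (ae_of_all _ fun y hy => ?_)
        rw [Real.norm_eq_abs]
        exact g_bound t x y (1+|x|) hx (abs_le.mpr ⟨hy.1.le, hy.2⟩) rfl
    have hGint : Integrable ((Set.Ioc (-1:ℝ) 1).indicator g) :=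
      hgIO.integrable_indicator measurableSet_Ioc
    have hw : Tendsto (fun N : ℕ => ((N:ℝ)+1/2)/2) atTop atTop := by
      apply Tendsto.atTop_div_const (by norm_num : (0:ℝ) < 2)
      exact tendsto_atTop_add_const_right _ _ tendsto_natCast_atTop_atTop
    have hrl := rl_sin ((Set.Ioc (-1:ℝ) 1).indicator g) hGint x _ hw
    refine Tendsto.congr (fun N => ?_) hrl
    rw [stepB N, intervalIntegral.integral_of_le (by norm_num : (-1:ℝ) ≤ 1),
      ← integral_indicator measurableSet_Ioc]
    refine congrArg _ (funext fun y => ?_)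
    rw [Set.indicator_mul_left]
  -- conclude
  have stepD : Tendsto (fun N => (E N / 2 + Real.exp (t*x) - Real.sinh t / t) / Real.sinh t)
      atTop (nhds (Real.exp (t * x) / Real.sinh t - 1 / t)) := by
    have h5 : Tendsto (fun N => E N / 2 + Real.exp (t*x) - Real.sinh t / t) atTop
        (nhds (Real.exp (t*x) - Real.sinh t / t)) := by
      have := ((stepC.div_const 2).add_const (Real.exp (t*x))).sub_const (Real.sinh t / t)
      simpa using this
    have h6 := h5.div_const (Real.sinh t)
    have h7 : (Real.exp (t*x) - Real.sinh t / t) / Real.sinh t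
        = Real.exp (t * x) / Real.sinh t - 1 / t := by
      field_simp
    rw [h7] at h6
    exact h6
  exact stepD.congr (fun N => (stepA N).symm)
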